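/- arXiv:math/0209188 — 2 statements merged into one kernel-verified Lean document; each statement's English description precedes it below -/
import Mathlib

section
/- Under hypotheses (a) c_{kj} = 0 for k = 1,...,i and (b) Σ_{l=i}^{k-1} c_{l,j-1} ≥ Σ_{l=i+1}^k c_{lj} for all k = i+1,...,j, the quantities f_{pj} = Σ_{k=1}^p c_{kj} − Σ_{k=1}^{p-1} c_{k,j-1} satisfy: f_{pj} = −Σ_{k=1}^{p-1} c_{k,j-1} for p ≤ i, and f_{pj} ≤ f_{ij} for p = i+1,...,j. In particular, max_{1 ≤ p ≤ j} f_{pj} is attained at some p ≤ i. -/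
attribute [local instance] Classical.propDecidable

/-- The quantity `f_{pj} = Σ_{k=1}^p c_{kj} − Σ_{k=1}^{p-1} c_{k,j-1}` of
Proposition 9.1 (Reineke). -/
def fval (c : ℕ → ℕ → ℤ) (p j : ℕ) : ℤ :=
  (∑ k ∈ Finset.Icc 1 p, c k j) - ∑ k ∈ Finset.Icc 1 (p - 1), c k (j - 1)

/-- The maximal index `i₀ ∈ [1, j]` with `f_{i₀ j} = max_p f_{pj}`. -/
noncomputable def argmaxF (c : ℕ → ℕ → ℤ) (j : ℕ) : ℕ :=
  (((Finset.Icc 1 j).filter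
      (fun p => ∀ q ∈ Finset.Icc 1 j, fval c q j ≤ fval c p j)).max).unbotD 0

/-- The combinatorial Kashiwara operator `F̃_j` on triangles (Proposition 9.1):
it increases `c_{i₀ j}` by `1`, decreases `c_{i₀, j-1}` by `1` (unless `i₀ = j`)
and fixes all other entries, where `i₀` is the maximal index attaining `max_p f_{pj}`. -/
noncomputable def Ftilde (j : ℕ) (c : ℕ → ℕ → ℤ) : ℕ → ℕ → ℤ :=
  fun k l =>
    if k = argmaxF c j ∧ l = j then c k l + 1
    else if k = argmaxF c j ∧ l = j - 1 ∧ argmaxF c j ≠ j then c k l - 1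
    else c k l

lemma sum_Icc_split (f : ℕ → ℤ) (i p : ℕ) (h : i ≤ p) :
    ∑ k ∈ Finset.Icc 1 p, f k
      = (∑ k ∈ Finset.Icc 1 i, f k) + ∑ k ∈ Finset.Icc (i + 1) p, f k := by
  have e : ∀ a b : ℕ, Finset.Icc (a + 1) b = Finset.Ioc a b := by
    intro a b; ext x; simp [Finset.mem_Icc, Finset.mem_Ioc]
  rw [show (1:ℕ) = 0 + 1 from rfl, e, e, e]
  exact (Finset.sum_Ioc_consecutive f (Nat.zero_le i) h).symm

/-- Computational core of Lemma 9.3: under (a) `c_{kj} = 0` for `k = 1, ..., i` and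
(b) `Σ_{l=i}^{k-1} c_{l,j-1} ≥ Σ_{l=i+1}^k c_{lj}` for all `k = i+1, ..., j`, the
quantities `f_{pj}` satisfy `f_{pj} = −Σ_{k=1}^{p-1} c_{k,j-1}` for `p ≤ i` and
`f_{pj} ≤ f_{ij}` for `p = i+1, ..., j`; in particular `max_{1 ≤ p ≤ j} f_{pj}` is
attained at some `p ≤ i`. -/
theorem fval_computation
    (n i j : ℕ) (c : ℕ → ℕ → ℤ)
    (hi : 1 ≤ i) (hij : i ≤ j) (hjn : j ≤ n)
    (hc : ∀ k l, 1 ≤ k → k ≤ l → l ≤ n → 0 ≤ c k l)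
    (ha : ∀ k, 1 ≤ k → k ≤ i → c k j = 0)
    (hb : ∀ k, i + 1 ≤ k → k ≤ j →
      ∑ l ∈ Finset.Icc (i + 1) k, c l j ≤ ∑ l ∈ Finset.Icc i (k - 1), c l (j - 1)) :
    (∀ p, 1 ≤ p → p ≤ i → fval c p j = -∑ k ∈ Finset.Icc 1 (p - 1), c k (j - 1)) ∧
    (∀ p, i + 1 ≤ p → p ≤ j → fval c p j ≤ fval c i j) ∧
    (∃ p, 1 ≤ p ∧ p ≤ i ∧ ∀ q ∈ Finset.Icc 1 j, fval c q j ≤ fval c p j) := by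
  have h1 : ∀ p, 1 ≤ p → p ≤ i →
      fval c p j = -∑ k ∈ Finset.Icc 1 (p - 1), c k (j - 1) := by
    intro p hp1 hpi
    have hz : ∑ k ∈ Finset.Icc 1 p, c k j = 0 := by
      apply Finset.sum_eq_zero
      intro k hk
      rw [Finset.mem_Icc] at hk
      exact ha k hk.1 (hk.2.trans hpi)
    rw [fval, hz]
    ring
  have h2 : ∀ p, i + 1 ≤ p → p ≤ j → fval c p j ≤ fval c i j := by
    intro p hp1 hpj
    have hip : i ≤ p := le_trans (Nat.le_succ i) hp1
    have hfi : fval c i j = -∑ k ∈ Finset.Icc 1 (i - 1), c k (j - 1) :=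
      h1 i hi le_rfl
    have hsplit1 : ∑ k ∈ Finset.Icc 1 p, c k j
        = (∑ k ∈ Finset.Icc 1 i, c k j) + ∑ k ∈ Finset.Icc (i + 1) p, c k j :=
      sum_Icc_split _ _ _ hip
    have hz : ∑ k ∈ Finset.Icc 1 i, c k j = 0 := by
      apply Finset.sum_eq_zero
      intro k hk
      rw [Finset.mem_Icc] at hk
      exact ha k hk.1 hk.2
    have hi1 : i - 1 + 1 = i := Nat.sub_add_cancel hi
    have hsplit2 : ∑ k ∈ Finset.Icc 1 (p - 1), c k (j - 1)
        = (∑ k ∈ Finset.Icc 1 (i - 1), c k (j - 1))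
          + ∑ k ∈ Finset.Icc i (p - 1), c k (j - 1) := by
      have := sum_Icc_split (fun k => c k (j - 1)) (i - 1) (p - 1)
        (Nat.sub_le_sub_right hip 1)
      rwa [hi1] at this
    have hbp := hb p hp1 hpj
    rw [fval, hsplit1, hz, hsplit2, hfi]
    linarith
  refine ⟨h1, h2, ?_⟩
  refine ⟨1, le_rfl, hi, ?_⟩
  have hf1 : fval c 1 j = 0 := by
    have := h1 1 le_rfl hi
    simpa using this
  intro q hq
  rw [Finset.mem_Icc] at hq
  rw [hf1]
  have key : ∀ p, 1 ≤ p → p ≤ i → fval c p j ≤ 0 := by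
    intro p hp1 hpi
    rw [h1 p hp1 hpi, neg_nonpos]
    apply Finset.sum_nonneg
    intro k hk
    rw [Finset.mem_Icc] at hk
    apply hc k (j - 1) hk.1
    · omega
    · omega
  rcases le_or_gt q i with h | h
  · exact key q hq.1 h
  · exact le_trans (h2 q h hq.2)
      (key i hi le_rfl)
end

section
/- Let (c_{kl}) be a triangle of nonnegative integers, fix j, and suppose the hypotheses of Lemma 9.1 hold for (i, j, s). Then for each t = 0, ..., s−1, in the intermediate triangle obtained from (c_{kl}) by adding t to c_{ij} and subtracting t from c_{i,j-1}, the quantity f_{kj} = Σ_{m=1}^k c^t_{mj} − Σ_{m=1}^{k-1} c^t_{m,j-1} satisfies f_{kj} ≤ f_{ij} for k < i and f_{kj} < f_{ij} for k > i; hence the maximal index attaining max_k f_{kj} is exactly i at every step. -/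
attribute [local instance] Classical.propDecidable

/-- The intermediate triangle of the proof of Lemma 9.1: add `t` to `c_{ij}` and
subtract `t` from `c_{i,j-1}`. -/
def interTriangle (c : ℕ → ℕ → ℤ) (i j : ℕ) (t : ℕ) : ℕ → ℕ → ℤ :=
  fun k l =>
    if k = i ∧ l = j then c k l + t
    else if k = i ∧ l = j - 1 then c k l - t
    else c k l


private lemma icc_eq_ioc (a b : ℕ) (ha : 1 ≤ a) : Finset.Icc a b = Finset.Ioc (a - 1) b := by
  rw [← Finset.Icc_add_one_left_eq_Ioc]
  congr 1
  omega

private lemma finset_max_eq {S : Finset ℕ} {i : ℕ} (hiS : i ∈ S) (hub : ∀ p ∈ S, p ≤ i) :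
    WithBot.unbotD 0 S.max = i := by
  have h : S.max = (i : WithBot ℕ) :=
    le_antisymm (Finset.max_le fun p hp => WithBot.coe_le_coe.mpr (hub p hp)) (Finset.le_max hiS)
  rw [h]
  rfl

private lemma fval_inter (c : ℕ → ℕ → ℤ) {i j : ℕ} (t k : ℕ) (hi : 1 ≤ i) (hj : 1 ≤ j) :
    fval (interTriangle c i j t) k j =
      fval c k j + (if i ≤ k then (t : ℤ) else 0) + (if i ≤ k - 1 then (t : ℤ) else 0) := by
  have hjj : ¬ (j = j - 1) := by omega
  have hjj2 : ¬ (j - 1 = j) := by omega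
  have h1 : ∀ m, interTriangle c i j t m j = c m j + if m = i then (t : ℤ) else 0 := by
    intro m
    simp only [interTriangle]
    by_cases h : m = i <;> simp [h, hjj, hjj2]
  have h2 : ∀ m, interTriangle c i j t m (j - 1) = c m (j - 1) - if m = i then (t : ℤ) else 0 := by
    intro m
    simp only [interTriangle]
    by_cases h : m = i <;> simp [h, hjj, hjj2]
  simp only [fval, h1, h2, Finset.sum_add_distrib, Finset.sum_sub_distrib,
    Finset.sum_ite_eq', Finset.mem_Icc]
  simp only [hi, true_and]
  ring

/-- Under the hypotheses of Lemma 9.1, for each `t = 0, ..., s-1` the quantities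
`f_{kj}` of the intermediate triangle `c^t` satisfy `f_{kj} ≤ f_{ij}` for `k < i` and
`f_{kj} < f_{ij}` for `k > i`; hence the maximal index attaining `max_k f_{kj}` is
exactly `i` at every step. -/
theorem intermediate_argmax
    (n i j s : ℕ) (c : ℕ → ℕ → ℤ)
    (hi : 1 ≤ i) (hij : i ≤ j) (hjn : j ≤ n)
    (hc : ∀ k l, 1 ≤ k → k ≤ l → l ≤ n → 0 ≤ c k l)
    (ha : ∀ k, 1 ≤ k → k ≤ i - 1 →
      ∑ l ∈ Finset.Icc k (i - 1), c l (j - 1) ≤ ∑ l ∈ Finset.Icc (k + 1) i, c l j)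
    (hb : ∀ k, i + 1 ≤ k → k ≤ j →
      (s : ℤ) ≤ (∑ l ∈ Finset.Icc i (k - 1), c l (j - 1)) -
        ∑ l ∈ Finset.Icc (i + 1) k, c l j) :
    ∀ t, t < s →
      (∀ k, 1 ≤ k → k < i →
        fval (interTriangle c i j t) k j ≤ fval (interTriangle c i j t) i j) ∧
      (∀ k, i < k → k ≤ j →
        fval (interTriangle c i j t) k j < fval (interTriangle c i j t) i j) ∧
      argmaxF (interTriangle c i j t) j = i := by

  intro t ht
  have hj1 : 1 ≤ j := le_trans hi hij
  have hs1 : (1 : ℤ) ≤ (s : ℤ) := by exact_mod_cast (by omega : 1 ≤ s)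
  have ht0 : (0 : ℤ) ≤ (t : ℤ) := Int.natCast_nonneg t
  -- comparison for original triangle, k < i
  have hlt : ∀ k, 1 ≤ k → k < i → fval c k j ≤ fval c i j := by
    intro k hk1 hki
    have hka := ha k hk1 (by omega)
    rw [icc_eq_ioc k (i - 1) hk1, icc_eq_ioc (k + 1) i (by omega)] at hka
    simp only [Nat.add_sub_cancel] at hka
    have d1 := Finset.sum_Ioc_consecutive (fun l => c l j) (by omega : (0 : ℕ) ≤ k)
      (le_of_lt hki)
    have d2 := Finset.sum_Ioc_consecutive (fun l => c l (j - 1)) (by omega : (0 : ℕ) ≤ k - 1)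
      (by omega : k - 1 ≤ i - 1)
    simp only [fval, icc_eq_ioc 1 _ le_rfl, Nat.sub_self]
    linarith
  -- comparison for original triangle, k > i
  have hgt : ∀ k, i < k → k ≤ j → fval c k j + (s : ℤ) ≤ fval c i j := by
    intro k hik hkj
    have hkb := hb k (by omega) hkj
    rw [icc_eq_ioc i (k - 1) hi, icc_eq_ioc (i + 1) k (by omega)] at hkb
    simp only [Nat.add_sub_cancel] at hkb
    have d1 := Finset.sum_Ioc_consecutive (fun l => c l j) (by omega : (0 : ℕ) ≤ i)
      (le_of_lt hik)
    have d2 := Finset.sum_Ioc_consecutive (fun l => c l (j - 1)) (by omega : (0 : ℕ) ≤ i - 1)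
      (by omega : i - 1 ≤ k - 1)
    simp only [fval, icc_eq_ioc 1 _ le_rfl, Nat.sub_self]
    linarith
  have hii : fval (interTriangle c i j t) i j = fval c i j + t := by
    rw [fval_inter c t i hi hj1]
    simp [show ¬ i ≤ i - 1 by omega]
  have res1 : ∀ k, 1 ≤ k → k < i →
      fval (interTriangle c i j t) k j ≤ fval (interTriangle c i j t) i j := by
    intro k hk1 hki
    rw [fval_inter c t k hi hj1, hii]
    simp only [show ¬ i ≤ k by omega, show ¬ i ≤ k - 1 by omega, if_false]
    have := hlt k hk1 hki
    linarith
  have res2 : ∀ k, i < k → k ≤ j →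
      fval (interTriangle c i j t) k j < fval (interTriangle c i j t) i j := by
    intro k hik hkj
    rw [fval_inter c t k hi hj1, hii]
    simp only [show i ≤ k by omega, show i ≤ k - 1 by omega, if_true]
    have h1 := hgt k hik hkj
    have hts : (t : ℤ) < (s : ℤ) := by exact_mod_cast ht
    linarith
  refine ⟨res1, res2, ?_⟩
  simp only [argmaxF]
  apply finset_max_eq
  · simp only [Finset.mem_filter, Finset.mem_Icc]
    refine ⟨⟨hi, hij⟩, ?_⟩
    intro q hq
    rcases lt_trichotomy q i with h | h | h
    · exact res1 q hq.1 h
    · rw [h]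
    · exact le_of_lt (res2 q h hq.2)
  · intro p hp
    simp only [Finset.mem_filter, Finset.mem_Icc] at hp
    by_contra h
    exact absurd (hp.2 i ⟨hi, hij⟩) (not_le.mpr (res2 p (by omega) hp.1.2))
end
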